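/- Let d ≥ 1, k = d+1, let ω ∈ 𝒢_{k,ℓ} with ℓ ≥ 2, let φ : [1,∞) → [1,∞) be non-decreasing, let L : [φ(1),∞) → [1,∞) satisfy L(x)·φ(L(x)) = x for all x ≥ φ(1), and let Λ = Aℤ^k be a unimodular lattice in ℝ^k such that every nonzero (λ,λ_k) ∈ Λ* = (A^{−1})ᵀℤ^k (with λ ∈ ℝ^d) satisfies H(λ)·|λ_k| > 1/φ(H(λ)). Let ρ ∈ (0,1/2)^d and let N ≥ φ(1) be an integer with ρ₁⋯ρ_d·N > φ(L(N)). For τ = (t₁,…,t_d,t_k) ∈ ℤ_{≥0}^k ∖ {0}, define 𝐍(τ) = (ρ₁^{−1}(2^{t₁}−1), …, ρ_d^{−1}(2^{t_d}−1), N^{−1}(2^{t_k}−1)), let 𝒰(τ) be the set of nonzero (λ,λ_k) ∈ Λ* whose i-th coordinate has absolute value between the i-th coordinate of 𝐍(τ) and the i-th coordinate of 𝐍(τ+(1,…,1)) for every i ≤ k, let Q = 2^{t₁+⋯+t_d}, let 𝐍 ∈ ℝ^d denote the first d coordinates of 𝐍(τ+(1,…,1)), and set X(τ) = ρ₁⋯ρ_d·N·Q^{−ℓ}·Σ_{(λ,λ_k)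 ∈ 𝒰(τ)} ω̂_k(N·λ_k). Then there is a constant C > 0 depending only on d and ω (and not on τ, N, ρ) such that X(τ) ≤ C·(2^{t_k}·Q)^{2−ℓ}·φ(2^d·H(𝐍))²/φ(L(N)). -/

import Mathlib

/-!
Two distinct points of the dyadic shell `𝒰(τ)` differ by a nonzero dual lattice point whose first
`d` coordinates are bounded by `2𝐍`, so its height is at most `M = 2^d H(𝐍)` and the Diophantine
hypothesis makes the last coordinates of the shell `1/(Mφ(M))`-separated. They lie in an interval
of length `≍ 2^{t_k}/N`, so the shell has `O(2^{t_k} M φ(M)/N)` points, and smoothness of `ω_k`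
bounds each term `ω̂_k(Nλ_k)` by `O(2^{-t_k ℓ})`. Applied to a single shell point, the same
separation gives `N ≤ 2^{t_k+1} M φ(M)`, which through `L(N)φ(L(N)) = N` turns into
`φ(L(N)) ≤ 2^{t_k+1} φ(M)`. Together with `ρ₁⋯ρ_d M ≤ 4^d Q` this yields the bound.
-/

open scoped BigOperators

/-- The Fourier transform `∫ w(x) e^{-2πiξx} dx` of a real weight function. -/
noncomputable def fhat (w : ℝ → ℝ) (ξ : ℝ) : ℂ :=
  ∫ x : ℝ, (w x : ℂ) * Complex.exp (-(2 * Real.pi * Complex.I * ξ * x))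

/-- The class 𝒢_{k,ℓ} of good weight tuples. -/
def GoodWeights (k ℓ : ℕ) (w : Fin k → ℝ → ℝ) : Prop :=
  ∀ i : Fin k,
    (∀ x, 0 ≤ w i x) ∧
    (Function.support (w i) ⊆ Set.Icc (-2 : ℝ) 2) ∧
    ContDiff ℝ ℓ (w i) ∧
    (∀ ξ : ℝ, (fhat (w i) ξ).im = 0 ∧ 0 ≤ (fhat (w i) ξ).re) ∧
    0 < (fhat (w i) 0).re

/-- Multiplicative height `H(m) = ∏ max(1,|mᵢ|)`. -/
noncomputable def Hmul {d : ℕ} (m : Fin d → ℝ) : ℝ := ∏ i, max 1 |m i|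

/-- Distance from `x` to the nearest integer. -/
noncomputable def distInt (x : ℝ) : ℝ := |x - (round x : ℝ)|

/-- The constant 𝔠(ω) = ω̂₁(0)⋯ω̂_k(0). -/
noncomputable def smoothC {k : ℕ} (w : Fin k → ℝ → ℝ) : ℝ := ∏ i, (fhat (w i) 0).re

/-- Smooth discrepancy of the Kronecker sequence of α in the box (γ; ρ) at scale N. -/
noncomputable def Dbox (d : ℕ) (w : Fin (d+1) → ℝ → ℝ) (α γ ρ : Fin d → ℝ) (N : ℝ) : ℝ :=
  (∑' p : (Fin d → ℤ) × ℤ,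
      w (Fin.last d) ((p.2 : ℝ) / N) *
        ∏ i : Fin d, w i.castSucc (((p.1 i : ℝ) + (p.2 : ℝ) * α i - γ i) / ρ i))
    - smoothC w * ((∏ i, ρ i) * N)

/-- The point of the lattice `A ℤ^k` indexed by the integer vector `a`. -/
noncomputable def latPt {k : ℕ} (A : Matrix (Fin k) (Fin k) ℝ) (a : Fin k → ℤ) : Fin k → ℝ :=
  A.mulVec (fun i => (a i : ℝ))

/-- The point of the dual lattice `(A⁻¹)ᵀ ℤ^k` indexed by the integer vector `a`. -/
noncomputable def dualPt {k : ℕ} (A : Matrix (Fin k) (Fin k) ℝ) (a : Fin k → ℤ) : Fin k → ℝ :=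
  (A⁻¹).transpose.mulVec (fun i => (a i : ℝ))

/-- Smooth lattice discrepancy of the lattice `A ℤ^{d+1}` in the box (γ; ρ) at scale N. -/
noncomputable def DboxLat (d : ℕ) (A : Matrix (Fin (d+1)) (Fin (d+1)) ℝ)
    (w : Fin (d+1) → ℝ → ℝ) (γ ρ : Fin d → ℝ) (N : ℝ) : ℝ :=
  (∑' a : Fin (d+1) → ℤ,
      w (Fin.last d) (latPt A a (Fin.last d) / N) *
        ∏ i : Fin d, w i.castSucc ((latPt A a i.castSucc - γ i) / ρ i))
    - smoothC w * ((∏ i, ρ i) * N)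

/-- Side-length vector of a test box: each ρᵢ ∈ (0, 1/2). -/
def IsBox {d : ℕ} (ρ : Fin d → ℝ) : Prop := ∀ i, 0 < ρ i ∧ ρ i < 1/2

/-- Every nonzero dual lattice point (λ, λ_k) satisfies H(λ)·|λ_k| > 1/φ(H(λ)). -/
def DualBad (d : ℕ) (A : Matrix (Fin (d+1)) (Fin (d+1)) ℝ) (φ : ℝ → ℝ) : Prop :=
  ∀ a : Fin (d+1) → ℤ, dualPt A a ≠ 0 →
    Hmul (fun i : Fin d => dualPt A a i.castSucc) * |dualPt A a (Fin.last d)| >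
      1 / φ (Hmul (fun i : Fin d => dualPt A a i.castSucc))

open MeasureTheory FourierTransform

theorem HasCompactSupport.iteratedDeriv {f : ℝ → ℂ} (hf : HasCompactSupport f) (n : ℕ) :
    HasCompactSupport (iteratedDeriv n f) := by
  rw [iteratedDeriv_eq_iterate]
  induction n with
  | zero => exact hf
  | succ n ih => rw [Function.iterate_succ_apply']; exact ih.deriv

theorem norm_fourier_le_integral_norm (f : ℝ → ℂ) (ξ : ℝ) : ‖𝓕 f ξ‖ ≤ ∫ x, ‖f x‖ :=
  VectorFourier.norm_fourierIntegral_le_integral_norm _ _ _ _ _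

theorem two_pi_abs_mul_pow_norm_fourier_le {ℓ : ℕ} {f : ℝ → ℂ} (hf : ContDiff ℝ ℓ f)
    (hcs : HasCompactSupport f) (ξ : ℝ) :
    (2 * Real.pi * |ξ|) ^ ℓ * ‖𝓕 f ξ‖ ≤ ∫ x, ‖iteratedDeriv ℓ f x‖ := by
  have hint : ∀ n : ℕ, (n : ℕ∞) ≤ ℓ → Integrable (iteratedDeriv n f) := fun n hn =>
    (hf.continuous_iteratedDeriv n (by exact_mod_cast hn)).integrable_of_hasCompactSupport
      (hcs.iteratedDeriv n)
  have h := norm_fourier_le_integral_norm (iteratedDeriv ℓ f) ξ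
  rw [Real.fourier_iteratedDeriv (N := ℓ) (by exact_mod_cast hf) hint le_rfl] at h
  simpa [norm_smul, abs_of_pos Real.pi_pos] using h

theorem exists_norm_fourier_mul_max_pow_le {ℓ : ℕ} {f : ℝ → ℂ} (hf : ContDiff ℝ ℓ f)
    (hcs : HasCompactSupport f) : ∃ C, 0 < C ∧ ∀ ξ, ‖𝓕 f ξ‖ * max 1 |ξ| ^ ℓ ≤ C := by
  set I₀ := ∫ x, ‖f x‖
  set Iℓ := ∫ x, ‖iteratedDeriv ℓ f x‖
  refine ⟨max I₀ Iℓ + 1, by positivity, fun ξ => ?_⟩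
  rcases le_total |ξ| 1 with h | h
  · rw [max_eq_left h, one_pow, mul_one]
    linarith [norm_fourier_le_integral_norm f ξ, le_max_left I₀ Iℓ]
  · have hpi : |ξ| ^ ℓ ≤ (2 * Real.pi * |ξ|) ^ ℓ := by
      gcongr
      nlinarith [Real.pi_gt_three]
    rw [max_eq_right h, mul_comm]
    nlinarith [two_pi_abs_mul_pow_norm_fourier_le hf hcs ξ, norm_nonneg (𝓕 f ξ),
      le_max_right I₀ Iℓ]

theorem fhat_eq_fourier (w : ℝ → ℝ) (ξ : ℝ) : fhat w ξ = 𝓕 (fun x => (w x : ℂ)) ξ := by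
  rw [Real.fourier_real_eq_integral_exp_smul, fhat]
  congr 1 with x
  rw [smul_eq_mul, mul_comm]
  push_cast
  ring_nf

theorem GoodWeights.exists_norm_fhat_mul_max_pow_le {k ℓ : ℕ} {w : Fin k → ℝ → ℝ}
    (hw : GoodWeights k ℓ w) (i : Fin k) :
    ∃ C, 0 < C ∧ ∀ ξ, ‖fhat (w i) ξ‖ * max 1 |ξ| ^ ℓ ≤ C := by
  simp only [fhat_eq_fourier]
  exact exists_norm_fourier_mul_max_pow_le (Complex.ofRealCLM.contDiff.comp (hw i).2.2.1)
    ((HasCompactSupport.of_support_subset_isCompact isCompact_Icc (hw i).2.1).comp_left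
      Complex.ofReal_zero)

theorem norm_le_of_two_pow_sub_one_le_abs {F : ℝ → ℂ} {C : ℝ} {ℓ : ℕ}
    (hC : ∀ ξ, ‖F ξ‖ * max 1 |ξ| ^ ℓ ≤ C) (n : ℕ) {ξ : ℝ} (hξ : 2 ^ n - 1 ≤ |ξ|) :
    ‖F ξ‖ ≤ 2 ^ ℓ * C / (2 ^ n) ^ ℓ := by
  have hmax : (2 : ℝ) ^ n / 2 ≤ max 1 |ξ| := by
    rcases n with _ | n
    · norm_num
    · have : (1 : ℝ) ≤ 2 ^ n := one_le_pow₀ one_le_two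
      rw [pow_succ, mul_div_cancel_right₀ _ two_ne_zero]
      rw [pow_succ] at hξ
      exact le_max_of_le_right (by linarith)
  rw [le_div_iff₀ (by positivity)]
  calc ‖F ξ‖ * (2 ^ n) ^ ℓ = 2 ^ ℓ * (‖F ξ‖ * (2 ^ n / 2) ^ ℓ) := by
        rw [div_pow]; field_simp
    _ ≤ 2 ^ ℓ * C := by gcongr; exact (by gcongr : ‖F ξ‖ * _ ≤ _).trans (hC ξ)

theorem tsum_le_of_abs_sub_gt {S : Type*} {f g : S → ℝ} {B R δ : ℝ} (hδ : 0 < δ) (hR : 0 ≤ R)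
    (hB : 0 ≤ B) (hf : ∀ a, f a ≤ B) (hg : ∀ a, |g a| ≤ R)
    (hsep : Pairwise fun a b => δ < |g a - g b|) :
    ∑' a, f a ≤ (2 * R / δ + 2) * B := by
  have hmem : ∀ a, ⌊g a / δ⌋ ∈ Finset.Icc ⌊-(R / δ)⌋ ⌊R / δ⌋ := fun a => by
    obtain ⟨h₁, h₂⟩ := abs_le.mp (hg a)
    rw [Finset.mem_Icc, ← neg_div]
    constructor <;> gcongr
  have hinj : Function.Injective
      fun a => (⟨⌊g a / δ⌋, hmem a⟩ : Finset.Icc ⌊-(R / δ)⌋ ⌊R / δ⌋) := by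
    intro a b hab
    by_contra hne
    have h := Int.abs_sub_lt_one_of_floor_eq_floor (congrArg Subtype.val hab)
    rw [← sub_div, abs_div, abs_of_pos hδ, div_lt_one hδ] at h
    exact (hsep hne).not_gt h
  have : Fintype S := Fintype.ofInjective _ hinj
  have hcard : (Fintype.card S : ℝ) ≤ 2 * R / δ + 2 := by
    have h := Fintype.card_le_of_injective _ hinj
    rw [Fintype.card_coe, Int.card_Icc] at h
    have hle : ⌊-(R / δ)⌋ ≤ ⌊R / δ⌋ + 1 := by
      have : -(R / δ) ≤ R / δ := by linarith [div_nonneg hR hδ.le]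
      linarith [Int.floor_le_floor this]
    have h' : (Fintype.card S : ℤ) ≤ ⌊R / δ⌋ + 1 - ⌊-(R / δ)⌋ := by omega
    have h'' : (Fintype.card S : ℝ) ≤ ⌊R / δ⌋ + 1 - ⌊-(R / δ)⌋ := by exact_mod_cast h'
    rw [mul_div_assoc]
    linarith [Int.floor_le (R / δ), Int.lt_floor_add_one (-(R / δ))]
  rw [tsum_fintype]
  calc ∑ a, f a ≤ ∑ _a : S, B := Finset.sum_le_sum fun a _ => hf a
    _ = Fintype.card S * B := by simp
    _ ≤ (2 * R / δ + 2) * B := by gcongr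

theorem MonotoneOn.apply_le_mul_of_mul_apply_le {φ : ℝ → ℝ} (hφ : MonotoneOn φ (Set.Ici 1))
    {x y c : ℝ} (hx : 1 ≤ x) (hy : 1 ≤ y) (hc : 1 ≤ c) (hφy : 0 ≤ φ y)
    (h : x * φ x ≤ c * (y * φ y)) : φ x ≤ c * φ y := by
  rcases le_total x y with hxy | hyx
  · nlinarith [hφ hx hy hxy]
  · refine le_of_mul_le_mul_left (h.trans ?_) (by linarith : (0 : ℝ) < x)
    nlinarith [mul_le_mul_of_nonneg_right hyx (mul_nonneg (by linarith : (0 : ℝ) ≤ c) hφy)]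

section DualLattice

variable {k : ℕ} {A : Matrix (Fin k) (Fin k) ℝ}

theorem dualPt_sub (a b : Fin k → ℤ) : dualPt A (a - b) = dualPt A a - dualPt A b := by
  simp only [dualPt, Pi.sub_apply, Int.cast_sub, ← Matrix.mulVec_sub]
  rfl

theorem dualPt_injective (hA : A.det ≠ 0) : Function.Injective (dualPt A) := by
  intro a b hab
  have hdet : (A⁻¹).transpose.det ≠ 0 := by
    rw [Matrix.det_transpose, Matrix.det_nonsing_inv, Ring.inverse_eq_inv']
    exact inv_ne_zero hA
  funext i
  exact_mod_cast congrFun (Matrix.mulVec_injective_of_det_ne_zero hdet hab) i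

end DualLattice

section Height

variable {d : ℕ}

theorem one_le_Hmul (m : Fin d → ℝ) : 1 ≤ Hmul m :=
  Finset.one_le_prod fun _ _ => le_max_left _ _

theorem Hmul_le_prod {c m : Fin d → ℝ} (hc : ∀ i, |c i| ≤ m i) (hm : ∀ i, 1 ≤ m i) :
    Hmul c ≤ ∏ i, m i :=
  Finset.prod_le_prod (fun _ _ => zero_le_one.trans (le_max_left _ _))
    fun i _ => max_le (hm i) (hc i)

theorem Hmul_eq_prod {m : Fin d → ℝ} (hm : ∀ i, 1 ≤ m i) : Hmul m = ∏ i, m i :=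
  Finset.prod_congr rfl fun i _ => by rw [abs_of_pos (by linarith [hm i]), max_eq_right (hm i)]

end Height
section Shell

variable {d : ℕ}

/-- The first `d` coordinates of the paper's `𝐍(τ + (1,…,1))`. -/
noncomputable def dyadicTop (ρ : Fin d → ℝ) (t : Fin d → ℕ) : Fin d → ℝ :=
  fun i => (ρ i)⁻¹ * ((2 : ℝ) ^ (t i + 1) - 1)

/-- The dyadic shell `𝒰(τ)` of dual lattice points, for `τ = (t, tk)`. -/
def dualShell (A : Matrix (Fin (d+1)) (Fin (d+1)) ℝ) (ρ : Fin d → ℝ) (N : ℝ) (t : Fin d → ℕ)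
    (tk : ℕ) (a : Fin (d+1) → ℤ) : Prop :=
  dualPt A a ≠ 0 ∧
    (∀ i : Fin d,
      (ρ i)⁻¹ * ((2 : ℝ) ^ (t i) - 1) ≤ |dualPt A a i.castSucc| ∧
      |dualPt A a i.castSucc| ≤ dyadicTop ρ t i) ∧
    (N⁻¹ * ((2 : ℝ) ^ tk - 1) ≤ |dualPt A a (Fin.last d)| ∧
      |dualPt A a (Fin.last d)| ≤ N⁻¹ * ((2 : ℝ) ^ (tk + 1) - 1))

/-- The paper's `2^d H(𝐍)`. -/
noncomputable def dyadicHeight (ρ : Fin d → ℝ) (t : Fin d → ℕ) : ℝ := 2 ^ d * Hmul (dyadicTop ρ t)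

variable {ρ : Fin d → ℝ} {t : Fin d → ℕ}

theorem one_le_dyadicHeight (ρ : Fin d → ℝ) (t : Fin d → ℕ) : 1 ≤ dyadicHeight ρ t :=
  one_le_mul_of_one_le_of_one_le (one_le_pow₀ one_le_two) (one_le_Hmul _)

theorem two_le_dyadicTop (hρ : IsBox ρ) (i : Fin d) : 2 ≤ dyadicTop ρ t i := by
  obtain ⟨hρ0, hρ2⟩ := hρ i
  have h2ρ : 2 ≤ (ρ i)⁻¹ := by rw [le_inv_comm₀ two_pos hρ0]; linarith
  have ht : (2 : ℝ) ≤ 2 ^ (t i + 1) := le_self_pow₀ one_le_two (by omega)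
  unfold dyadicTop
  nlinarith

theorem dyadicHeight_eq_prod (hρ : IsBox ρ) :
    dyadicHeight ρ t = ∏ i, 2 * dyadicTop ρ t i := by
  rw [dyadicHeight, Finset.prod_mul_distrib, Finset.prod_const, Finset.card_univ,
    Fintype.card_fin, Hmul_eq_prod fun i => one_le_two.trans (two_le_dyadicTop hρ i)]

theorem Hmul_le_dyadicHeight (hρ : IsBox ρ) {c : Fin d → ℝ}
    (hc : ∀ i, |c i| ≤ 2 * dyadicTop ρ t i) : Hmul c ≤ dyadicHeight ρ t := by
  rw [dyadicHeight_eq_prod hρ]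
  exact Hmul_le_prod hc fun i => by linarith [two_le_dyadicTop (t := t) hρ i]

theorem prod_mul_dyadicHeight_le (hρ : IsBox ρ) :
    (∏ i, ρ i) * dyadicHeight ρ t ≤ 4 ^ d * 2 ^ (∑ i, t i) := by
  rw [dyadicHeight_eq_prod hρ, ← Finset.prod_mul_distrib]
  calc ∏ i, ρ i * (2 * dyadicTop ρ t i) ≤ ∏ i, 4 * (2 : ℝ) ^ t i := by
        refine Finset.prod_le_prod (fun i _ => ?_) fun i _ => ?_
        · exact mul_nonneg (hρ i).1.le (by linarith [two_le_dyadicTop (t := t) hρ i])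
        · rw [dyadicTop, mul_left_comm, mul_inv_cancel_left₀ (hρ i).1.ne', pow_succ]
          linarith
    _ = 4 ^ d * 2 ^ (∑ i, t i) := by
        rw [Finset.prod_mul_distrib, Finset.prod_pow_eq_pow_sum]; simp

variable {A : Matrix (Fin (d+1)) (Fin (d+1)) ℝ} {φ : ℝ → ℝ} {N : ℝ} {tk : ℕ}

theorem DualBad.inv_mul_lt_abs_last (hbad : DualBad d A φ) (hφ1 : ∀ x, 1 ≤ x → 1 ≤ φ x)
    (hφ : MonotoneOn φ (Set.Ici 1)) {a : Fin (d+1) → ℤ} (ha : dualPt A a ≠ 0) {M : ℝ}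
    (hM : Hmul (fun i : Fin d => dualPt A a i.castSucc) ≤ M) :
    (M * φ M)⁻¹ < |dualPt A a (Fin.last d)| := by
  set H := Hmul fun i : Fin d => dualPt A a i.castSucc
  have hH : 1 ≤ H := one_le_Hmul _
  have hφH : 1 ≤ φ H := hφ1 H hH
  have hφHM : φ H ≤ φ M := hφ hH (hH.trans hM) hM
  have h := hbad a ha
  have hM0 : 0 ≤ M := by linarith
  rw [gt_iff_lt, div_lt_iff₀ (by linarith)] at h
  rw [inv_lt_iff_one_lt_mul₀ (by nlinarith)]
  calc 1 < H * |dualPt A a (Fin.last d)| * φ H := h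
    _ ≤ |dualPt A a (Fin.last d)| * (M * φ M) := by
        rw [mul_right_comm, mul_comm]; gcongr

theorem dualShell.inv_mul_lt_abs_last_sub (hbad : DualBad d A φ)
    (hφ1 : ∀ x, 1 ≤ x → 1 ≤ φ x) (hφ : MonotoneOn φ (Set.Ici 1)) (hA : A.det ≠ 0)
    (hρ : IsBox ρ) {a b : Fin (d+1) → ℤ} (ha : dualShell A ρ N t tk a)
    (hb : dualShell A ρ N t tk b) (hab : a ≠ b) :
    (dyadicHeight ρ t * φ (dyadicHeight ρ t))⁻¹ <
      |dualPt A a (Fin.last d) - dualPt A b (Fin.last d)| := by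
  have hne : dualPt A (a - b) ≠ 0 := fun h =>
    hab (dualPt_injective hA (by rw [← sub_eq_zero, ← dualPt_sub, h]))
  have h := hbad.inv_mul_lt_abs_last hφ1 hφ hne
    (Hmul_le_dyadicHeight (t := t) hρ fun i => ?_)
  · simpa [dualPt_sub] using h
  rw [dualPt_sub, Pi.sub_apply, two_mul]
  exact (abs_sub _ _).trans (add_le_add (ha.2.1 i).2 (hb.2.1 i).2)

theorem dualShell.inv_mul_lt_abs_last (hbad : DualBad d A φ) (hφ1 : ∀ x, 1 ≤ x → 1 ≤ φ x)
    (hφ : MonotoneOn φ (Set.Ici 1)) (hρ : IsBox ρ) {a : Fin (d+1) → ℤ}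
    (ha : dualShell A ρ N t tk a) :
    (dyadicHeight ρ t * φ (dyadicHeight ρ t))⁻¹ <
      |dualPt A a (Fin.last d)| :=
  hbad.inv_mul_lt_abs_last hφ1 hφ ha.1 <| Hmul_le_dyadicHeight hρ fun i =>
    (ha.2.1 i).2.trans (by linarith [two_le_dyadicTop (t := t) hρ i])

theorem dualShell.one_lt_mul (hbad : DualBad d A φ) (hφ1 : ∀ x, 1 ≤ x → 1 ≤ φ x)
    (hφ : MonotoneOn φ (Set.Ici 1)) (hρ : IsBox ρ) {a : Fin (d+1) → ℤ}
    (ha : dualShell A ρ N t tk a) :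
    1 < N⁻¹ * ((2 : ℝ) ^ (tk + 1) - 1) *
      (dyadicHeight ρ t * φ (dyadicHeight ρ t)) := by
  have hM := one_le_dyadicHeight ρ t
  have hφM := hφ1 _ hM
  exact (inv_lt_iff_one_lt_mul₀ (by positivity)).1
    ((ha.inv_mul_lt_abs_last hbad hφ1 hφ hρ).trans_le ha.2.2.2)

theorem tsum_dualShell_le (hbad : DualBad d A φ) (hφ1 : ∀ x, 1 ≤ x → 1 ≤ φ x)
    (hφ : MonotoneOn φ (Set.Ici 1)) (hA : A.det ≠ 0) (hρ : IsBox ρ) (hN : 0 < N)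
    {f : (Fin (d+1) → ℤ) → ℝ} {B : ℝ} (hB : 0 ≤ B) (hf : ∀ a, dualShell A ρ N t tk a → f a ≤ B)
    {a₀ : Fin (d+1) → ℤ} (ha₀ : dualShell A ρ N t tk a₀) :
    ∑' a : {a // dualShell A ρ N t tk a}, f a ≤
      8 * 2 ^ tk / N * (dyadicHeight ρ t * φ (dyadicHeight ρ t)) * B := by
  set M := dyadicHeight ρ t
  have hM : 1 ≤ M := one_le_dyadicHeight ρ t
  have hP : 0 < M * φ M := by nlinarith [hφ1 M hM]
  have hR : N⁻¹ * ((2 : ℝ) ^ (tk + 1) - 1) ≤ 2 * 2 ^ tk / N := by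
    rw [div_eq_inv_mul, pow_succ, mul_comm (2 ^ tk : ℝ)]
    gcongr
    linarith
  have hRP := ha₀.one_lt_mul hbad hφ1 hφ hρ
  have h := tsum_le_of_abs_sub_gt (S := {a // dualShell A ρ N t tk a}) (inv_pos.2 hP)
    (by nlinarith) hB (fun a => hf a.1 a.2) (g := fun a => dualPt A a.1 (Fin.last d))
    (fun a => a.2.2.2.2)
    fun a b hab => a.2.inv_mul_lt_abs_last_sub hbad hφ1 hφ hA hρ b.2 (Subtype.coe_ne_coe.2 hab)
  refine h.trans (mul_le_mul_of_nonneg_right ?_ hB)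
  have := mul_le_mul_of_nonneg_right hR hP.le
  rw [div_inv_eq_mul]
  linarith [show 8 * 2 ^ tk / N * (M * φ M) = 4 * (2 * 2 ^ tk / N * (M * φ M)) by ring]

theorem dualShell.apply_le_two_pow_succ_mul (hbad : DualBad d A φ)
    (hφ1 : ∀ x, 1 ≤ x → 1 ≤ φ x) (hφ : MonotoneOn φ (Set.Ici 1)) (hρ : IsBox ρ) (hN : 0 < N)
    {a : Fin (d+1) → ℤ} (ha : dualShell A ρ N t tk a) {x : ℝ} (hx : 1 ≤ x) (hxN : x * φ x = N) :
    φ x ≤ 2 ^ (tk + 1) * φ (dyadicHeight ρ t) := by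
  have hM := one_le_dyadicHeight ρ t
  have hφM := hφ1 _ hM
  have h := ha.one_lt_mul hbad hφ1 hφ hρ
  rw [mul_assoc, inv_mul_eq_div, lt_div_iff₀' hN] at h
  refine hφ.apply_le_mul_of_mul_apply_le hx hM (one_le_pow₀ one_le_two) (by linarith) ?_
  rw [hxN]
  nlinarith

theorem dualShell.norm_le {F : ℝ → ℂ} {C : ℝ} {ℓ : ℕ} (hC : ∀ ξ, ‖F ξ‖ * max 1 |ξ| ^ ℓ ≤ C)
    (hN : 0 < N) {a : Fin (d+1) → ℤ} (ha : dualShell A ρ N t tk a) :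
    ‖F (N * dualPt A a (Fin.last d))‖ ≤ 2 ^ ℓ * C / (2 ^ tk) ^ ℓ := by
  refine norm_le_of_two_pow_sub_one_le_abs hC tk ?_
  rw [abs_mul, abs_of_pos hN, ← inv_mul_le_iff₀ hN]
  exact ha.2.2.1

end Shell

theorem X_tau_bound_general
    (d ℓ : ℕ)
    (w : Fin (d+1) → ℝ → ℝ) (hw : GoodWeights (d+1) ℓ w) :
    ∃ C : ℝ, 0 < C ∧
      ∀ (φ L : ℝ → ℝ) (A : Matrix (Fin (d+1)) (Fin (d+1)) ℝ)
        (ρ : Fin d → ℝ) (N : ℕ) (t : Fin d → ℕ) (tk : ℕ),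
        (∀ x, 1 ≤ x → 1 ≤ φ x) →
        (∀ x y, 1 ≤ x → x ≤ y → φ x ≤ φ y) →
        (∀ x, φ 1 ≤ x → 1 ≤ L x) →
        (∀ x, φ 1 ≤ x → L x * φ (L x) = x) →
        |A.det| = 1 →
        DualBad d A φ →
        IsBox ρ →
        φ 1 ≤ (N : ℝ) →
        φ (L N) < (∏ i, ρ i) * N →
        ¬(t = 0 ∧ tk = 0) →
        (∏ i, ρ i) * (N : ℝ) / ((2 : ℝ) ^ (∑ i, t i)) ^ ℓ *
          (∑' a : {a : Fin (d+1) → ℤ //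
              dualPt A a ≠ 0 ∧
              (∀ i : Fin d,
                (ρ i)⁻¹ * ((2 : ℝ) ^ (t i) - 1) ≤ |dualPt A a i.castSucc| ∧
                |dualPt A a i.castSucc| ≤ (ρ i)⁻¹ * ((2 : ℝ) ^ (t i + 1) - 1)) ∧
              ((N : ℝ)⁻¹ * ((2 : ℝ) ^ tk - 1) ≤ |dualPt A a (Fin.last d)| ∧
                |dualPt A a (Fin.last d)| ≤ (N : ℝ)⁻¹ * ((2 : ℝ) ^ (tk + 1) - 1))},
            (fhat (w (Fin.last d)) ((N : ℝ) * dualPt A a.1 (Fin.last d))).re)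
        ≤ C * ((2 : ℝ) ^ tk * (2 : ℝ) ^ (∑ i, t i)) ^ (2 - (ℓ : ℤ)) *
            (φ (2 ^ d * Hmul (fun i : Fin d => (ρ i)⁻¹ * ((2 : ℝ) ^ (t i + 1) - 1)))) ^ 2 /
            φ (L N) := by
  obtain ⟨C, hC0, hC⟩ := hw.exists_norm_fhat_mul_max_pow_le (Fin.last d)
  refine ⟨16 * 4 ^ d * 2 ^ ℓ * C, by positivity, ?_⟩
  intro φ L A ρ N t tk hφ1 hφmono hL1 hLφ hdet hbad hbox hφN _ _
  replace hφmono : MonotoneOn φ (Set.Ici 1) := fun x hx y _ hxy => hφmono x y hx hxy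
  have hN : (0 : ℝ) < N := by linarith [hφ1 1 le_rfl]
  have hφLN : 1 ≤ φ (L N) := hφ1 _ (hL1 _ hφN)
  change _ * ∑' a : {a // dualShell A ρ N t tk a}, _ ≤ _ * φ (dyadicHeight ρ t) ^ 2 / _
  set M := dyadicHeight ρ t
  set T : ℝ := 2 ^ tk
  set Q : ℝ := 2 ^ ∑ i, t i
  rcases isEmpty_or_nonempty {a // dualShell A ρ N t tk a} with hU | ⟨⟨a₀, ha₀⟩⟩
  · rw [tsum_empty, mul_zero]
    exact div_nonneg (by positivity) (by linarith)
  have hsum := tsum_dualShell_le hbad hφ1 hφmono (fun h => by simp [h] at hdet) hbox hN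
    (by positivity) (fun a ha => (Complex.re_le_norm _).trans (ha.norm_le hC hN)) ha₀
  have hLN := ha₀.apply_le_two_pow_succ_mul hbad hφ1 hφmono hbox hN (hL1 _ hφN) (hLφ _ hφN)
  have hφM1 : 1 ≤ φ M := hφ1 M (one_le_dyadicHeight ρ t)
  have hφM : φ M ≤ 2 * T * φ M ^ 2 / φ (L N) := by
    rw [le_div_iff₀ (by linarith)]
    rw [pow_succ] at hLN
    nlinarith
  have hρM := prod_mul_dyadicHeight_le (t := t) hbox
  have hQ : 1 ≤ Q := one_le_pow₀ one_le_two
  have hT : 0 < T := by positivity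
  calc (∏ i, ρ i) * N / Q ^ ℓ * ∑' a : {a // dualShell A ρ N t tk a}, _
      ≤ (∏ i, ρ i) * N / Q ^ ℓ * (8 * T / N * (M * φ M) * (2 ^ ℓ * C / T ^ ℓ)) :=
        mul_le_mul_of_nonneg_left hsum
          (div_nonneg (mul_nonneg (Finset.prod_nonneg fun i _ => (hbox i).1.le) hN.le)
            (by positivity))
    _ = 8 * 2 ^ ℓ * C * ((∏ i, ρ i) * M) * (T * φ M) / (T * Q) ^ ℓ := by
        field_simp
        ring
    _ ≤ 8 * 2 ^ ℓ * C * (4 ^ d * Q) * (T * (2 * T * φ M ^ 2 / φ (L N))) / (T * Q) ^ ℓ := by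
        gcongr
    _ = 16 * 4 ^ d * 2 ^ ℓ * C * (T ^ 2 * Q) / (T * Q) ^ ℓ * φ M ^ 2 / φ (L N) := by ring
    _ ≤ 16 * 4 ^ d * 2 ^ ℓ * C * (T * Q) ^ 2 / (T * Q) ^ ℓ * φ M ^ 2 / φ (L N) := by
        gcongr
        nlinarith
    _ = 16 * 4 ^ d * 2 ^ ℓ * C * (T * Q) ^ (2 - (ℓ : ℤ)) * φ M ^ 2 / φ (L N) := by
        rw [zpow_sub₀ (by positivity), zpow_ofNat, zpow_natCast]
        ring

/-- Lemma: the bound on `X(τ)` for the dyadic regimes outside the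
uncertainty range. -/
theorem X_tau_bound
    (d ℓ : ℕ) (hd : 1 ≤ d) (hℓ : 2 ≤ ℓ)
    (w : Fin (d+1) → ℝ → ℝ) (hw : GoodWeights (d+1) ℓ w) :
    ∃ C : ℝ, 0 < C ∧
      ∀ (φ L : ℝ → ℝ) (A : Matrix (Fin (d+1)) (Fin (d+1)) ℝ)
        (ρ : Fin d → ℝ) (N : ℕ) (t : Fin d → ℕ) (tk : ℕ),
        (∀ x, 1 ≤ x → 1 ≤ φ x) →
        (∀ x y, 1 ≤ x → x ≤ y → φ x ≤ φ y) →
        (∀ x, φ 1 ≤ x → 1 ≤ L x) →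
        (∀ x, φ 1 ≤ x → L x * φ (L x) = x) →
        |A.det| = 1 →
        DualBad d A φ →
        IsBox ρ →
        φ 1 ≤ (N : ℝ) →
        φ (L N) < (∏ i, ρ i) * N →
        ¬(t = 0 ∧ tk = 0) →
        (∏ i, ρ i) * (N : ℝ) / ((2 : ℝ) ^ (∑ i, t i)) ^ ℓ *
          (∑' a : {a : Fin (d+1) → ℤ //
              dualPt A a ≠ 0 ∧
              (∀ i : Fin d,
                (ρ i)⁻¹ * ((2 : ℝ) ^ (t i) - 1) ≤ |dualPt A a i.castSucc| ∧
                |dualPt A a i.castSucc| ≤ (ρ i)⁻¹ * ((2 : ℝ) ^ (t i + 1) - 1)) ∧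
              ((N : ℝ)⁻¹ * ((2 : ℝ) ^ tk - 1) ≤ |dualPt A a (Fin.last d)| ∧
                |dualPt A a (Fin.last d)| ≤ (N : ℝ)⁻¹ * ((2 : ℝ) ^ (tk + 1) - 1))},
            (fhat (w (Fin.last d)) ((N : ℝ) * dualPt A a.1 (Fin.last d))).re)
        ≤ C * ((2 : ℝ) ^ tk * (2 : ℝ) ^ (∑ i, t i)) ^ (2 - (ℓ : ℤ)) *
            (φ (2 ^ d * Hmul (fun i : Fin d => (ρ i)⁻¹ * ((2 : ℝ) ^ (t i + 1) - 1)))) ^ 2 /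
            φ (L N) :=
  X_tau_bound_general d ℓ w hw
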